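/- For every k ≥ 1, the trace of B_k equals (-1)^{k+1} · Σ_{i=1}^{k} C(k-1, i-1) · C(k-i, i-1). In particular, trace B_2 = -1, trace B_3 = 3, trace B_4 = -7, and trace B_5 = 19. -/
import Mathlib


def Bmat (k : ℕ) : Matrix (Fin k) (Fin k) ℤ :=
  fun i j => (-1) ^ (((i : ℕ) + 1) + ((j : ℕ) + 1) + k + 1) *
    ((k - 1).choose (i : ℕ)) * ((k - ((i : ℕ) + 1)).choose (j : ℕ))

theorem Bmat_trace (k : ℕ) (hk : 1 ≤ k) :
    (Bmat k).trace =
      (-1) ^ (k + 1) *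
        ∑ i : Fin k, ((k - 1).choose (i : ℕ) * (k - ((i : ℕ) + 1)).choose (i : ℕ) : ℤ) ∧
    (Bmat 2).trace = -1 ∧ (Bmat 3).trace = 3 ∧ (Bmat 4).trace = -7 ∧ (Bmat 5).trace = 19 := by
  have key : ∀ k : ℕ, (Bmat k).trace =
      (-1) ^ (k + 1) *
        ∑ i : Fin k, ((k - 1).choose (i : ℕ) * (k - ((i : ℕ) + 1)).choose (i : ℕ) : ℤ) := by
    intro k
    rw [Matrix.trace, Finset.mul_sum]
    refine Finset.sum_congr rfl fun i _ => ?_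
    simp only [Matrix.diag, Bmat]
    have : ((i : ℕ) + 1) + ((i : ℕ) + 1) + k + 1 = 2 * ((i : ℕ) + 1) + (k + 1) := by ring
    rw [this, pow_add, pow_mul]
    norm_num
    ring
  refine ⟨key k, ?_, ?_, ?_, ?_⟩ <;> rw [key] <;> decide
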